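/- For the anisotropic total-variation-type objective (1/2)‖L − d‖² + β Σ(|∇L − E|) minimized over 0 ≤ L ≤ 1 (entrywise), if (p*, q*) ∈ 𝒫 minimizes the dual H(p,q) = (1/2)(‖d − β𝓛(p,q)‖² − ‖H_C(d − β𝓛(p,q))‖²) + β[Tr(pᵀE₁) + Tr(qᵀE₂)], then L* = P_C(d − β𝓛(p*,q*)) is an optimal solution of the primal problem, where C = {L : 0 ≤ L_{i,j} ≤ 1} and H_C(x) = x − P_C(x). -/
import Mathlib


noncomputable section

/-- Extension of `p ∈ ℝ^{(h-1)×w}` by zero outside its index range. -/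
def pE (h w : ℕ) (p : Fin (h - 1) → Fin w → ℝ) (i j : ℕ) : ℝ :=
  if hij : i < h - 1 ∧ j < w then p ⟨i, hij.1⟩ ⟨j, hij.2⟩ else 0

/-- Extension of `q ∈ ℝ^{h×(w-1)}` by zero outside its index range. -/
def qE (h w : ℕ) (q : Fin h → Fin (w - 1) → ℝ) (i j : ℕ) : ℝ :=
  if hij : i < h ∧ j < w - 1 then q ⟨i, hij.1⟩ ⟨j, hij.2⟩ else 0

/-- The operator `𝓛(p,q)_{i,j} = p_{i-1,j} + q_{i,j-1} - p_{i,j} - q_{i,j}`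
with the zero boundary conventions. -/
def Lop (h w : ℕ) (p : Fin (h - 1) → Fin w → ℝ) (q : Fin h → Fin (w - 1) → ℝ) :
    Fin h → Fin w → ℝ := fun i j =>
  (if i.1 = 0 then 0 else pE h w p (i.1 - 1) j.1) +
    (if j.1 = 0 then 0 else qE h w q i.1 (j.1 - 1)) -
      pE h w p i.1 j.1 - qE h w q i.1 j.1

/-- First component of `𝓛ᵀ L`: vertical forward differences. -/
def LtP (h w : ℕ) (L : Fin h → Fin w → ℝ) : Fin (h - 1) → Fin w → ℝ :=
  fun i j => L ⟨i.1 + 1, by omega⟩ j - L ⟨i.1, by omega⟩ j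

/-- Second component of `𝓛ᵀ L`: horizontal forward differences. -/
def LtQ (h w : ℕ) (L : Fin h → Fin w → ℝ) : Fin h → Fin (w - 1) → ℝ :=
  fun i j => L i ⟨j.1 + 1, by omega⟩ - L i ⟨j.1, by omega⟩


/-- Entrywise clamping of a matrix to `[0,1]`: the metric projection onto
`C = {L : 0 ≤ L ≤ 1}`. -/
def clampC (h w : ℕ) (L : Fin h → Fin w → ℝ) : Fin h → Fin w → ℝ :=
  fun i j => min 1 (max 0 (L i j))

/-! ### Auxiliary lemmas -/

/-- Extension of a full matrix by zero. -/
def matE (h w : ℕ) (L : Fin h → Fin w → ℝ) (i j : ℕ) : ℝ :=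
  if hij : i < h ∧ j < w then L ⟨i, hij.1⟩ ⟨j, hij.2⟩ else 0

lemma matE_coe {h w : ℕ} (L : Fin h → Fin w → ℝ) (i : Fin h) (j : Fin w) :
    matE h w L i.1 j.1 = L i j := by
  simp [matE, i.isLt, j.isLt]

lemma sum2_le {h w : ℕ} {F G : Fin h → Fin w → ℝ} (hFG : ∀ i j, F i j ≤ G i j) :
    ∑ i, ∑ j, F i j ≤ ∑ i, ∑ j, G i j :=
  Finset.sum_le_sum fun i _ => Finset.sum_le_sum fun j _ => hFG i j

lemma clamp_mem (x : ℝ) : 0 ≤ min 1 (max 0 x) ∧ min 1 (max 0 x) ≤ 1 :=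
  ⟨le_min (by norm_num) (le_max_left 0 x), min_le_left _ _⟩

lemma proj_ineq (a x : ℝ) (h0 : 0 ≤ a) (h1 : a ≤ 1) :
    0 ≤ (min 1 (max 0 x) - a) * (x - min 1 (max 0 x)) := by
  rcases le_or_gt x 0 with hx | hx
  · rw [max_eq_left hx, min_eq_right (by norm_num : (0:ℝ) ≤ 1)]
    nlinarith
  · rcases le_or_gt x 1 with hx1 | hx1
    · rw [max_eq_right hx.le, min_eq_right hx1]
      ring_nf
      simp
    · rw [max_eq_right hx.le, min_eq_left hx1.le]
      nlinarith

/-- Pointwise key inequality underlying the dual relation. -/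
lemma pt_le (a t b : ℝ) (h0 : 0 ≤ a) (h1 : a ≤ 1) :
    (1/2)*t^2 + (1/2)*(a - min 1 (max 0 (t - b)))^2 ≤
      (1/2)*(a - t)^2 + a * b +
        ((1/2)*(t - b)^2 - (1/2)*((t - b) - min 1 (max 0 (t - b)))^2) := by
  have h2 := proj_ineq a (t - b) h0 h1
  set y := min 1 (max 0 (t - b)) with hy
  nlinarith [h2]

/-- Pointwise equality when `a` is the clamp itself. -/
lemma pt_eq (t b : ℝ) :
    (1/2)*(min 1 (max 0 (t - b)) - t)^2 + (min 1 (max 0 (t - b))) * b +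
        ((1/2)*(t - b)^2 - (1/2)*((t - b) - min 1 (max 0 (t - b)))^2) = (1/2)*t^2 := by
  set y := min 1 (max 0 (t - b)) with hy
  ring


/-- Column identity: summation by parts in the vertical direction. -/
lemma col_id (h w : ℕ) (hh : 0 < h) (L : Fin h → Fin w → ℝ)
    (p : Fin (h - 1) → Fin w → ℝ) (j : ℕ) :
    ∑ i ∈ Finset.range h, matE h w L i j *
        ((if i = 0 then 0 else pE h w p (i - 1) j) - pE h w p i j) =
      ∑ i ∈ Finset.range (h - 1), pE h w p i j * (matE h w L (i + 1) j - matE h w L i j) := by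
  obtain ⟨m, rfl⟩ : ∃ m, h = m + 1 := ⟨h - 1, by omega⟩
  simp only [Nat.add_sub_cancel]
  have e1 : ∑ i ∈ Finset.range (m + 1), matE (m+1) w L i j *
      ((if i = 0 then 0 else pE (m+1) w p (i - 1) j) - pE (m+1) w p i j) =
      (∑ i ∈ Finset.range (m + 1), matE (m+1) w L i j *
        (if i = 0 then 0 else pE (m+1) w p (i - 1) j)) -
      ∑ i ∈ Finset.range (m + 1), matE (m+1) w L i j * pE (m+1) w p i j := by
    rw [← Finset.sum_sub_distrib]; congr 1; ext i; ring
  rw [e1]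
  rw [Finset.sum_range_succ' (fun i => matE (m+1) w L i j *
      (if i = 0 then 0 else pE (m+1) w p (i - 1) j)) m]
  rw [Finset.sum_range_succ (fun i => matE (m+1) w L i j * pE (m+1) w p i j) m]
  have hpm : pE (m+1) w p m j = 0 := by
    simp only [pE, Nat.add_sub_cancel]
    rw [dif_neg]; omega
  rw [hpm]
  simp only [if_neg (Nat.succ_ne_zero _), Nat.add_sub_cancel, if_pos rfl, if_true, mul_zero,
    add_zero]
  rw [← Finset.sum_sub_distrib]
  congr 1; ext i; ring

/-- Row identity: summation by parts in the horizontal direction. -/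
lemma row_id (h w : ℕ) (hw : 0 < w) (L : Fin h → Fin w → ℝ)
    (q : Fin h → Fin (w - 1) → ℝ) (i : ℕ) :
    ∑ j ∈ Finset.range w, matE h w L i j *
        ((if j = 0 then 0 else qE h w q i (j - 1)) - qE h w q i j) =
      ∑ j ∈ Finset.range (w - 1), qE h w q i j * (matE h w L i (j + 1) - matE h w L i j) := by
  obtain ⟨m, rfl⟩ : ∃ m, w = m + 1 := ⟨w - 1, by omega⟩
  simp only [Nat.add_sub_cancel]
  have e1 : ∑ j ∈ Finset.range (m + 1), matE h (m+1) L i j *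
      ((if j = 0 then 0 else qE h (m+1) q i (j - 1)) - qE h (m+1) q i j) =
      (∑ j ∈ Finset.range (m + 1), matE h (m+1) L i j *
        (if j = 0 then 0 else qE h (m+1) q i (j - 1))) -
      ∑ j ∈ Finset.range (m + 1), matE h (m+1) L i j * qE h (m+1) q i j := by
    rw [← Finset.sum_sub_distrib]; congr 1; ext j; ring
  rw [e1]
  rw [Finset.sum_range_succ' (fun j => matE h (m+1) L i j *
      (if j = 0 then 0 else qE h (m+1) q i (j - 1))) m]
  rw [Finset.sum_range_succ (fun j => matE h (m+1) L i j * qE h (m+1) q i j) m]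
  have hqm : qE h (m+1) q i m = 0 := by
    simp only [qE, Nat.add_sub_cancel]
    rw [dif_neg]; omega
  rw [hqm]
  simp only [if_neg (Nat.succ_ne_zero _), Nat.add_sub_cancel, if_pos rfl, if_true, mul_zero,
    add_zero]
  rw [← Finset.sum_sub_distrib]
  congr 1; ext j; ring


lemma pE_coe {h w : ℕ} (p : Fin (h - 1) → Fin w → ℝ) (i : Fin (h - 1)) (j : Fin w) :
    pE h w p i.1 j.1 = p i j := by
  simp [pE, i.isLt, j.isLt]

lemma qE_coe {h w : ℕ} (q : Fin h → Fin (w - 1) → ℝ) (i : Fin h) (j : Fin (w - 1)) :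
    qE h w q i.1 j.1 = q i j := by
  simp [qE, i.isLt, j.isLt]

/-- The adjoint identity `⟨L, 𝓛(p,q)⟩ = ⟨p, ∇₁L⟩ + ⟨q, ∇₂L⟩`. -/
lemma adj (h w : ℕ) (hh : 0 < h) (hw : 0 < w) (L : Fin h → Fin w → ℝ)
    (p : Fin (h - 1) → Fin w → ℝ) (q : Fin h → Fin (w - 1) → ℝ) :
    ∑ i, ∑ j, L i j * Lop h w p q i j =
      (∑ i, ∑ j, p i j * LtP h w L i j) + ∑ i, ∑ j, q i j * LtQ h w L i j := by
  have split : ∀ (i : Fin h) (j : Fin w), L i j * Lop h w p q i j =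
      L i j * ((if i.1 = 0 then 0 else pE h w p (i.1 - 1) j.1) - pE h w p i.1 j.1) +
      L i j * ((if j.1 = 0 then 0 else qE h w q i.1 (j.1 - 1)) - qE h w q i.1 j.1) := by
    intro i j; simp only [Lop]; ring
  simp only [split, Finset.sum_add_distrib]
  congr 1
  · -- vertical part
    rw [Finset.sum_comm]
    have hcols : ∀ j : Fin w,
        (∑ i : Fin h, L i j *
          ((if i.1 = 0 then 0 else pE h w p (i.1 - 1) j.1) - pE h w p i.1 j.1)) =
        ∑ i : Fin (h - 1), p i j * LtP h w L i j := by
      intro j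
      have lhs_eq : (∑ i : Fin h, L i j *
          ((if i.1 = 0 then 0 else pE h w p (i.1 - 1) j.1) - pE h w p i.1 j.1)) =
          ∑ i ∈ Finset.range h, matE h w L i j.1 *
            ((if i = 0 then 0 else pE h w p (i - 1) j.1) - pE h w p i j.1) := by
        rw [← Fin.sum_univ_eq_sum_range]
        exact Finset.sum_congr rfl fun i _ => by rw [matE_coe]
      have rhs_eq : (∑ i : Fin (h - 1), p i j * LtP h w L i j) =
          ∑ i ∈ Finset.range (h - 1), pE h w p i j.1 *
            (matE h w L (i + 1) j.1 - matE h w L i j.1) := by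
        rw [← Fin.sum_univ_eq_sum_range]
        refine Finset.sum_congr rfl fun i _ => ?_
        rw [pE_coe]
        have hi : i.1 < h - 1 := i.isLt
        have hi1 : i.1 + 1 < h := by omega
        have hi0 : i.1 < h := by omega
        have h1 : matE h w L (i.1 + 1) j.1 = L ⟨i.1 + 1, hi1⟩ j := by
          simp [matE, j.isLt, hi1]
        have h2 : matE h w L i.1 j.1 = L ⟨i.1, hi0⟩ j := by
          simp [matE, j.isLt, hi0]
        rw [h1, h2, LtP]
      rw [lhs_eq, rhs_eq, col_id h w hh L p j.1]
    rw [Finset.sum_congr rfl fun j _ => hcols j, Finset.sum_comm]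
  · -- horizontal part
    have hrows : ∀ i : Fin h,
        (∑ j : Fin w, L i j *
          ((if j.1 = 0 then 0 else qE h w q i.1 (j.1 - 1)) - qE h w q i.1 j.1)) =
        ∑ j : Fin (w - 1), q i j * LtQ h w L i j := by
      intro i
      have lhs_eq : (∑ j : Fin w, L i j *
          ((if j.1 = 0 then 0 else qE h w q i.1 (j.1 - 1)) - qE h w q i.1 j.1)) =
          ∑ j ∈ Finset.range w, matE h w L i.1 j *
            ((if j = 0 then 0 else qE h w q i.1 (j - 1)) - qE h w q i.1 j) := by
        rw [← Fin.sum_univ_eq_sum_range]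
        exact Finset.sum_congr rfl fun j _ => by rw [matE_coe]
      have rhs_eq : (∑ j : Fin (w - 1), q i j * LtQ h w L i j) =
          ∑ j ∈ Finset.range (w - 1), qE h w q i.1 j *
            (matE h w L i.1 (j + 1) - matE h w L i.1 j) := by
        rw [← Fin.sum_univ_eq_sum_range]
        refine Finset.sum_congr rfl fun j _ => ?_
        rw [qE_coe]
        have hj : j.1 < w - 1 := j.isLt
        have hj1 : j.1 + 1 < w := by omega
        have hj0 : j.1 < w := by omega
        have h1 : matE h w L i.1 (j.1 + 1) = L i ⟨j.1 + 1, hj1⟩ := by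
          simp [matE, i.isLt, hj1]
        have h2 : matE h w L i.1 j.1 = L i ⟨j.1, hj0⟩ := by
          simp [matE, i.isLt, hj0]
        rw [h1, h2, LtQ]
      rw [lhs_eq, rhs_eq, row_id h w hw L q i.1]
    exact Finset.sum_congr rfl fun i _ => hrows i


lemma pE_lin {h w : ℕ} (c : ℝ) (p1 p2 : Fin (h - 1) → Fin w → ℝ) (i j : ℕ) :
    pE h w (fun i j => p1 i j + c * (p2 i j - p1 i j)) i j =
      pE h w p1 i j + c * (pE h w p2 i j - pE h w p1 i j) := by
  unfold pE; split_ifs <;> simp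

lemma qE_lin {h w : ℕ} (c : ℝ) (q1 q2 : Fin h → Fin (w - 1) → ℝ) (i j : ℕ) :
    qE h w (fun i j => q1 i j + c * (q2 i j - q1 i j)) i j =
      qE h w q1 i j + c * (qE h w q2 i j - qE h w q1 i j) := by
  unfold qE; split_ifs <;> simp

lemma lop_lin {h w : ℕ} (c : ℝ) (p1 p2 : Fin (h - 1) → Fin w → ℝ)
    (q1 q2 : Fin h → Fin (w - 1) → ℝ) (i : Fin h) (j : Fin w) :
    Lop h w (fun i j => p1 i j + c * (p2 i j - p1 i j))
        (fun i j => q1 i j + c * (q2 i j - q1 i j)) i j =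
      Lop h w p1 q1 i j + c * (Lop h w p2 q2 i j - Lop h w p1 q1 i j) := by
  unfold Lop
  simp only [pE_lin, qE_lin]
  split_ifs <;> ring

/-- The Lagrangian-type function. -/
def Phi (h w : ℕ) (d : Fin h → Fin w → ℝ) (β : ℝ) (E1 : Fin (h - 1) → Fin w → ℝ)
    (E2 : Fin h → Fin (w - 1) → ℝ) (L : Fin h → Fin w → ℝ)
    (p : Fin (h - 1) → Fin w → ℝ) (q : Fin h → Fin (w - 1) → ℝ) : ℝ :=
  (∑ i, ∑ j, ((1/2) * (L i j - d i j)^2 + L i j * (β * Lop h w p q i j))) -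
    β * ((∑ i, ∑ j, p i j * E1 i j) + ∑ i, ∑ j, q i j * E2 i j)


section Main

variable (h w : ℕ) (d : Fin h → Fin w → ℝ) (β : ℝ)
variable (E1 : Fin (h - 1) → Fin w → ℝ) (E2 : Fin h → Fin (w - 1) → ℝ)
variable (H : (Fin (h - 1) → Fin w → ℝ) → (Fin h → Fin (w - 1) → ℝ) → ℝ)

/-- Weak duality with a strong-convexity remainder term. -/
lemma keyA
    (hH : ∀ p q, H p q =
      (1 / 2) * ((∑ i, ∑ j, (d i j - β * Lop h w p q i j) ^ 2) -
          ∑ i, ∑ j, ((d i j - β * Lop h w p q i j) -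
            clampC h w (fun i j => d i j - β * Lop h w p q i j) i j) ^ 2) +
        β * ((∑ i, ∑ j, p i j * E1 i j) + ∑ i, ∑ j, q i j * E2 i j))
    (p : Fin (h - 1) → Fin w → ℝ) (q : Fin h → Fin (w - 1) → ℝ)
    (L : Fin h → Fin w → ℝ) (hL : ∀ i j, 0 ≤ L i j ∧ L i j ≤ 1) :
    (1/2) * (∑ i, ∑ j, (d i j)^2) +
      (1/2) * (∑ i, ∑ j,
        (L i j - clampC h w (fun i j => d i j - β * Lop h w p q i j) i j)^2) ≤
      Phi h w d β E1 E2 L p q + H p q := by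
  rw [hH]
  unfold Phi
  have core : ∑ i, ∑ j, ((1/2) * (d i j)^2 + (1/2) *
        (L i j - min 1 (max 0 (d i j - β * Lop h w p q i j)))^2) ≤
      ∑ i, ∑ j, ((1/2) * (L i j - d i j)^2 + L i j * (β * Lop h w p q i j) +
        ((1/2) * (d i j - β * Lop h w p q i j)^2 -
          (1/2) * ((d i j - β * Lop h w p q i j) -
            min 1 (max 0 (d i j - β * Lop h w p q i j)))^2)) :=
    sum2_le fun i j => pt_le (L i j) (d i j) (β * Lop h w p q i j) (hL i j).1 (hL i j).2
  have eL : ∑ i, ∑ j, ((1/2) * (d i j)^2 + (1/2) *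
        (L i j - min 1 (max 0 (d i j - β * Lop h w p q i j)))^2) =
      (1/2) * (∑ i, ∑ j, (d i j)^2) +
      (1/2) * (∑ i, ∑ j,
        (L i j - clampC h w (fun i j => d i j - β * Lop h w p q i j) i j)^2) := by
    simp only [clampC, Finset.mul_sum, Finset.sum_add_distrib]
  have eR : ∑ i, ∑ j, ((1/2) * (L i j - d i j)^2 + L i j * (β * Lop h w p q i j) +
        ((1/2) * (d i j - β * Lop h w p q i j)^2 -
          (1/2) * ((d i j - β * Lop h w p q i j) -
            min 1 (max 0 (d i j - β * Lop h w p q i j)))^2)) =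
      (∑ i, ∑ j, ((1/2) * (L i j - d i j)^2 + L i j * (β * Lop h w p q i j))) +
      (1/2) * ((∑ i, ∑ j, (d i j - β * Lop h w p q i j)^2) -
          ∑ i, ∑ j, ((d i j - β * Lop h w p q i j) -
            clampC h w (fun i j => d i j - β * Lop h w p q i j) i j)^2) := by
    simp only [clampC, Finset.mul_sum, Finset.sum_add_distrib, Finset.sum_sub_distrib,
      mul_sub]
  linarith [core, eL, eR]

/-- Exact duality identity at the clamped point. -/
lemma keyA'
    (hH : ∀ p q, H p q =
      (1 / 2) * ((∑ i, ∑ j, (d i j - β * Lop h w p q i j) ^ 2) -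
          ∑ i, ∑ j, ((d i j - β * Lop h w p q i j) -
            clampC h w (fun i j => d i j - β * Lop h w p q i j) i j) ^ 2) +
        β * ((∑ i, ∑ j, p i j * E1 i j) + ∑ i, ∑ j, q i j * E2 i j))
    (p : Fin (h - 1) → Fin w → ℝ) (q : Fin h → Fin (w - 1) → ℝ) :
    Phi h w d β E1 E2 (clampC h w (fun i j => d i j - β * Lop h w p q i j)) p q + H p q =
      (1/2) * (∑ i, ∑ j, (d i j)^2) := by
  rw [hH]
  unfold Phi
  have core : ∑ i, ∑ j, ((1/2) *
        (clampC h w (fun i j => d i j - β * Lop h w p q i j) i j - d i j)^2 +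
        clampC h w (fun i j => d i j - β * Lop h w p q i j) i j * (β * Lop h w p q i j) +
        ((1/2) * (d i j - β * Lop h w p q i j)^2 -
          (1/2) * ((d i j - β * Lop h w p q i j) -
            min 1 (max 0 (d i j - β * Lop h w p q i j)))^2)) =
      ∑ i, ∑ j, (1/2) * (d i j)^2 := by
    refine Finset.sum_congr rfl fun i _ => Finset.sum_congr rfl fun j _ => ?_
    have := pt_eq (d i j) (β * Lop h w p q i j)
    simp only [clampC]
    linarith [this]
  have eR : ∑ i, ∑ j, ((1/2) *
        (clampC h w (fun i j => d i j - β * Lop h w p q i j) i j - d i j)^2 +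
        clampC h w (fun i j => d i j - β * Lop h w p q i j) i j * (β * Lop h w p q i j) +
        ((1/2) * (d i j - β * Lop h w p q i j)^2 -
          (1/2) * ((d i j - β * Lop h w p q i j) -
            min 1 (max 0 (d i j - β * Lop h w p q i j)))^2)) =
      (∑ i, ∑ j, ((1/2) *
        (clampC h w (fun i j => d i j - β * Lop h w p q i j) i j - d i j)^2 +
        clampC h w (fun i j => d i j - β * Lop h w p q i j) i j * (β * Lop h w p q i j))) +
      (1/2) * ((∑ i, ∑ j, (d i j - β * Lop h w p q i j)^2) -
          ∑ i, ∑ j, ((d i j - β * Lop h w p q i j) -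
            clampC h w (fun i j => d i j - β * Lop h w p q i j) i j)^2) := by
    simp only [clampC, Finset.mul_sum, Finset.sum_add_distrib, Finset.sum_sub_distrib,
      mul_sub]
  have eC : ∑ i, ∑ j, (1/2) * (d i j)^2 = (1/2) * (∑ i, ∑ j, (d i j)^2) := by
    simp only [Finset.mul_sum]
  linarith [core, eR, eC]

end Main


lemma phi_repr (h w : ℕ) (hh : 0 < h) (hw : 0 < w) (d : Fin h → Fin w → ℝ) (β : ℝ)
    (E1 : Fin (h - 1) → Fin w → ℝ) (E2 : Fin h → Fin (w - 1) → ℝ)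
    (L : Fin h → Fin w → ℝ) (p : Fin (h - 1) → Fin w → ℝ) (q : Fin h → Fin (w - 1) → ℝ) :
    Phi h w d β E1 E2 L p q = (1/2) * (∑ i, ∑ j, (L i j - d i j)^2) +
      β * (((∑ i, ∑ j, p i j * LtP h w L i j) + ∑ i, ∑ j, q i j * LtQ h w L i j) -
        ((∑ i, ∑ j, p i j * E1 i j) + ∑ i, ∑ j, q i j * E2 i j)) := by
  unfold Phi
  have e2 : ∀ (i : Fin h) (j : Fin w), L i j * (β * Lop h w p q i j) =
      β * (L i j * Lop h w p q i j) := fun i j => by ring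
  simp only [e2, Finset.sum_add_distrib, ← Finset.mul_sum]
  rw [adj h w hh hw L p q]
  ring

lemma phi_affine (h w : ℕ) (d : Fin h → Fin w → ℝ) (β : ℝ)
    (E1 : Fin (h - 1) → Fin w → ℝ) (E2 : Fin h → Fin (w - 1) → ℝ)
    (L : Fin h → Fin w → ℝ) (c : ℝ) (p1 p2 : Fin (h - 1) → Fin w → ℝ)
    (q1 q2 : Fin h → Fin (w - 1) → ℝ) :
    Phi h w d β E1 E2 L (fun i j => p1 i j + c * (p2 i j - p1 i j))
        (fun i j => q1 i j + c * (q2 i j - q1 i j)) =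
      Phi h w d β E1 E2 L p1 q1 +
        c * (Phi h w d β E1 E2 L p2 q2 - Phi h w d β E1 E2 L p1 q1) := by
  unfold Phi
  have key : ∀ (i : Fin h) (j : Fin w),
      (1/2) * (L i j - d i j)^2 + L i j * (β * Lop h w
        (fun i j => p1 i j + c * (p2 i j - p1 i j))
        (fun i j => q1 i j + c * (q2 i j - q1 i j)) i j) =
      ((1/2) * (L i j - d i j)^2 + L i j * (β * Lop h w p1 q1 i j)) +
        c * (((1/2) * (L i j - d i j)^2 + L i j * (β * Lop h w p2 q2 i j)) -
          ((1/2) * (L i j - d i j)^2 + L i j * (β * Lop h w p1 q1 i j))) := fun i j => by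
    rw [lop_lin]; ring
  have keyE1 : ∀ (i : Fin (h - 1)) (j : Fin w),
      (p1 i j + c * (p2 i j - p1 i j)) * E1 i j =
        p1 i j * E1 i j + c * (p2 i j * E1 i j - p1 i j * E1 i j) := fun i j => by ring
  have keyE2 : ∀ (i : Fin h) (j : Fin (w - 1)),
      (q1 i j + c * (q2 i j - q1 i j)) * E2 i j =
        q1 i j * E2 i j + c * (q2 i j * E2 i j - q1 i j * E2 i j) := fun i j => by ring
  simp only [key, keyE1, keyE2, Finset.sum_add_distrib, Finset.sum_sub_distrib,
    ← Finset.mul_sum]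
  ring

lemma phi_diff (h w : ℕ) (d : Fin h → Fin w → ℝ) (β : ℝ)
    (E1 : Fin (h - 1) → Fin w → ℝ) (E2 : Fin h → Fin (w - 1) → ℝ)
    (L1 L2 : Fin h → Fin w → ℝ) (p ps : Fin (h - 1) → Fin w → ℝ)
    (q qs : Fin h → Fin (w - 1) → ℝ) :
    (Phi h w d β E1 E2 L1 p q - Phi h w d β E1 E2 L1 ps qs) -
      (Phi h w d β E1 E2 L2 p q - Phi h w d β E1 E2 L2 ps qs) =
      ∑ i, ∑ j, (L1 i j - L2 i j) * (β * (Lop h w p q i j - Lop h w ps qs i j)) := by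
  unfold Phi
  have e : ∀ (i : Fin h) (j : Fin w),
      (L1 i j - L2 i j) * (β * (Lop h w p q i j - Lop h w ps qs i j)) =
        (L1 i j * (β * Lop h w p q i j) - L1 i j * (β * Lop h w ps qs i j)) -
          (L2 i j * (β * Lop h w p q i j) - L2 i j * (β * Lop h w ps qs i j)) :=
    fun i j => by ring
  simp only [e, Finset.sum_add_distrib, Finset.sum_sub_distrib]
  ring

lemma limit_le (D K : ℝ) (hK : 0 ≤ K) (hall : ∀ t : ℝ, 0 < t → t ≤ 1 → D ≤ t * K) :
    D ≤ 0 := by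
  by_contra hD
  push_neg at hD
  have ht0 : 0 < min 1 (D / (2 * K + 1)) := by
    apply lt_min one_pos
    positivity
  have h1 := hall _ ht0 (min_le_left _ _)
  have h2 : min 1 (D / (2 * K + 1)) * K ≤ (D / (2 * K + 1)) * K :=
    mul_le_mul_of_nonneg_right (min_le_right _ _) hK
  have h3 : (D / (2 * K + 1)) * K < D := by
    rw [div_mul_eq_mul_div, div_lt_iff₀ (by linarith)]
    nlinarith
  linarith

lemma quad_bound (u c t : ℝ) : -(1/2) * u^2 - t * (u * c) ≤ (1/2) * t^2 * c^2 := by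
  nlinarith [sq_nonneg (u + t * c)]

lemma convex_abs (a b t : ℝ) (ha : |a| ≤ 1) (hb : |b| ≤ 1) (ht0 : 0 ≤ t) (ht1 : t ≤ 1) :
    |a + t * (b - a)| ≤ 1 := by
  rw [abs_le] at *
  constructor <;> nlinarith [ha.1, ha.2, hb.1, hb.2]


lemma step3 (h w : ℕ) (hh : 0 < h) (hw : 0 < w)
    (d : Fin h → Fin w → ℝ) (β : ℝ)
    (E1 : Fin (h - 1) → Fin w → ℝ) (E2 : Fin h → Fin (w - 1) → ℝ)
    (H : (Fin (h - 1) → Fin w → ℝ) → (Fin h → Fin (w - 1) → ℝ) → ℝ)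
    (hH : ∀ p q, H p q =
      (1 / 2) * ((∑ i, ∑ j, (d i j - β * Lop h w p q i j) ^ 2) -
          ∑ i, ∑ j, ((d i j - β * Lop h w p q i j) -
            clampC h w (fun i j => d i j - β * Lop h w p q i j) i j) ^ 2) +
        β * ((∑ i, ∑ j, p i j * E1 i j) + ∑ i, ∑ j, q i j * E2 i j))
    (ps : Fin (h - 1) → Fin w → ℝ) (qs : Fin h → Fin (w - 1) → ℝ)
    (hps : ∀ i j, |ps i j| ≤ 1) (hqs : ∀ i j, |qs i j| ≤ 1)
    (hmin : ∀ (p : Fin (h - 1) → Fin w → ℝ) (q : Fin h → Fin (w - 1) → ℝ),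
      (∀ i j, |p i j| ≤ 1) → (∀ i j, |q i j| ≤ 1) → H ps qs ≤ H p q)
    (Lstar : Fin h → Fin w → ℝ)
    (hLstar : Lstar = clampC h w (fun i j => d i j - β * Lop h w ps qs i j))
    (p : Fin (h - 1) → Fin w → ℝ) (q : Fin h → Fin (w - 1) → ℝ)
    (hp : ∀ i j, |p i j| ≤ 1) (hq : ∀ i j, |q i j| ≤ 1) :
    Phi h w d β E1 E2 Lstar p q ≤ Phi h w d β E1 E2 Lstar ps qs := by
  set D := Phi h w d β E1 E2 Lstar p q - Phi h w d β E1 E2 Lstar ps qs with hD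
  suffices hD0 : D ≤ 0 by linarith [hD0]
  set K := (1/2) * ∑ i, ∑ j, (β * (Lop h w p q i j - Lop h w ps qs i j))^2 with hK
  have hKnn : 0 ≤ K := by
    rw [hK]
    have : 0 ≤ ∑ i, ∑ j, (β * (Lop h w p q i j - Lop h w ps qs i j))^2 :=
      Finset.sum_nonneg fun i _ => Finset.sum_nonneg fun j _ => sq_nonneg _
    linarith
  apply limit_le D K hKnn
  intro t ht0 ht1
  set pt := fun i j => ps i j + t * (p i j - ps i j) with hpt
  set qt := fun i j => qs i j + t * (q i j - qs i j) with hqt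
  set Lt := clampC h w (fun i j => d i j - β * Lop h w pt qt i j) with hLt
  have hLtC : ∀ i j, 0 ≤ Lt i j ∧ Lt i j ≤ 1 := fun i j => clamp_mem _
  have hptP : ∀ i j, |pt i j| ≤ 1 := fun i j => convex_abs _ _ _ (hps i j) (hp i j) ht0.le ht1
  have hqtP : ∀ i j, |qt i j| ≤ 1 := fun i j => convex_abs _ _ _ (hqs i j) (hq i j) ht0.le ht1
  have A1 : Phi h w d β E1 E2 Lt pt qt + H pt qt = (1/2) * (∑ i, ∑ j, (d i j)^2) :=
    keyA' h w d β E1 E2 H hH pt qt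
  have A2 : Phi h w d β E1 E2 Lstar ps qs + H ps qs = (1/2) * (∑ i, ∑ j, (d i j)^2) := by
    rw [hLstar]; exact keyA' h w d β E1 E2 H hH ps qs
  have A3 : H ps qs ≤ H pt qt := hmin pt qt hptP hqtP
  have A4 : (1/2) * (∑ i, ∑ j, (d i j)^2) +
      (1/2) * (∑ i, ∑ j, (Lt i j - Lstar i j)^2) ≤
      Phi h w d β E1 E2 Lt ps qs + H ps qs := by
    have := keyA h w d β E1 E2 H hH ps qs Lt hLtC
    rw [← hLstar] at this
    exact this
  have A5 : Phi h w d β E1 E2 Lt pt qt = Phi h w d β E1 E2 Lt ps qs +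
      t * (Phi h w d β E1 E2 Lt p q - Phi h w d β E1 E2 Lt ps qs) :=
    phi_affine h w d β E1 E2 Lt t ps p qs q
  have A6 : (Phi h w d β E1 E2 Lt p q - Phi h w d β E1 E2 Lt ps qs) - D =
      ∑ i, ∑ j, (Lt i j - Lstar i j) * (β * (Lop h w p q i j - Lop h w ps qs i j)) := by
    rw [hD]
    exact phi_diff h w d β E1 E2 Lt Lstar p ps q qs
  set SUC := ∑ i, ∑ j, (Lt i j - Lstar i j) * (β * (Lop h w p q i j - Lop h w ps qs i j))
    with hSUC
  set Su2 := ∑ i, ∑ j, (Lt i j - Lstar i j)^2 with hSu2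
  -- chain: t*D + t*SUC + (1/2)*Su2 ≤ 0
  have hchain : t * D + t * SUC + (1/2) * Su2 ≤ 0 := by nlinarith [A1, A2, A3, A4, A5, A6]
  -- quadratic bound
  have hquad : (-(1/2)) * Su2 + (-t) * SUC ≤ t^2 * K := by
    have e1 : (-(1/2)) * Su2 + (-t) * SUC =
        ∑ i, ∑ j, ((-(1/2)) * (Lt i j - Lstar i j)^2 +
          (-t) * ((Lt i j - Lstar i j) * (β * (Lop h w p q i j - Lop h w ps qs i j)))) := by
      rw [hSu2, hSUC]
      simp only [Finset.mul_sum, Finset.sum_add_distrib]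
    have e2 : t^2 * K =
        ∑ i, ∑ j, ((1/2) * t^2 * (β * (Lop h w p q i j - Lop h w ps qs i j))^2) := by
      rw [hK]
      simp only [Finset.mul_sum]
      exact Finset.sum_congr rfl fun i _ => Finset.sum_congr rfl fun j _ => by ring
    rw [e1, e2]
    refine sum2_le fun i j => ?_
    nlinarith [sq_nonneg ((Lt i j - Lstar i j) +
      t * (β * (Lop h w p q i j - Lop h w ps qs i j)))]
  have htD : t * D ≤ t * (t * K) := by nlinarith [hchain, hquad]
  exact le_of_mul_le_mul_left htD ht0


lemma mySignMul (v : ℝ) : (if 0 ≤ v then (1:ℝ) else -1) * v = |v| := by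
  split_ifs with hv
  · rw [abs_of_nonneg hv]; ring
  · rw [abs_of_neg (lt_of_not_ge hv)]; ring

lemma mul_le_abs' (a v : ℝ) (ha : |a| ≤ 1) : a * v ≤ |v| := by
  calc a * v ≤ |a * v| := le_abs_self _
    _ = |a| * |v| := abs_mul a v
    _ ≤ 1 * |v| := mul_le_mul_of_nonneg_right ha (abs_nonneg v)
    _ = |v| := one_mul _

lemma merge_sub {m n : ℕ} (a b c : Fin m → Fin n → ℝ) :
    (∑ i, ∑ j, a i j * b i j) - (∑ i, ∑ j, a i j * c i j) =
      ∑ i, ∑ j, a i j * (b i j - c i j) := by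
  simp only [mul_sub, Finset.sum_sub_distrib]

/-- If `(p*, q*) ∈ 𝒫` minimizes the dual objective, then
`L* = P_C(d - β 𝓛(p*, q*))` is optimal for the primal constrained TV
problem `min_{0 ≤ L ≤ 1} (1/2)‖L - d‖² + β ∑|∇L - E|`. -/
theorem tv_primal_from_dual (h w : ℕ) (hh : 0 < h) (hw : 0 < w)
    (d : Fin h → Fin w → ℝ) (β : ℝ) (hβ : 0 < β)
    (E1 : Fin (h - 1) → Fin w → ℝ) (E2 : Fin h → Fin (w - 1) → ℝ)
    (H : (Fin (h - 1) → Fin w → ℝ) → (Fin h → Fin (w - 1) → ℝ) → ℝ)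
    (hH : ∀ p q, H p q =
      (1 / 2) * ((∑ i, ∑ j, (d i j - β * Lop h w p q i j) ^ 2) -
          ∑ i, ∑ j, ((d i j - β * Lop h w p q i j) -
            clampC h w (fun i j => d i j - β * Lop h w p q i j) i j) ^ 2) +
        β * ((∑ i, ∑ j, p i j * E1 i j) + ∑ i, ∑ j, q i j * E2 i j))
    (ps : Fin (h - 1) → Fin w → ℝ) (qs : Fin h → Fin (w - 1) → ℝ)
    (hps : ∀ i j, |ps i j| ≤ 1) (hqs : ∀ i j, |qs i j| ≤ 1)
    (hmin : ∀ (p : Fin (h - 1) → Fin w → ℝ) (q : Fin h → Fin (w - 1) → ℝ),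
      (∀ i j, |p i j| ≤ 1) → (∀ i j, |q i j| ≤ 1) → H ps qs ≤ H p q)
    (Lstar : Fin h → Fin w → ℝ)
    (hLstar : Lstar = clampC h w (fun i j => d i j - β * Lop h w ps qs i j)) :
    (∀ i j, 0 ≤ Lstar i j ∧ Lstar i j ≤ 1) ∧
      ∀ L : Fin h → Fin w → ℝ, (∀ i j, 0 ≤ L i j ∧ L i j ≤ 1) →
        (1 / 2) * (∑ i, ∑ j, (Lstar i j - d i j) ^ 2) +
            β * ((∑ i, ∑ j, |LtP h w Lstar i j - E1 i j|) +
              ∑ i, ∑ j, |LtQ h w Lstar i j - E2 i j|) ≤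
          (1 / 2) * (∑ i, ∑ j, (L i j - d i j) ^ 2) +
            β * ((∑ i, ∑ j, |LtP h w L i j - E1 i j|) +
              ∑ i, ∑ j, |LtQ h w L i j - E2 i j|) := by
  have hLstarC : ∀ i j, 0 ≤ Lstar i j ∧ Lstar i j ≤ 1 := by
    rw [hLstar]; exact fun i j => clamp_mem _
  refine ⟨hLstarC, fun L hL => ?_⟩
  -- the dual sign variables attaining the absolute values at Lstar
  set phat : Fin (h - 1) → Fin w → ℝ :=
    fun i j => if 0 ≤ LtP h w Lstar i j - E1 i j then 1 else -1 with hphat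
  set qhat : Fin h → Fin (w - 1) → ℝ :=
    fun i j => if 0 ≤ LtQ h w Lstar i j - E2 i j then 1 else -1 with hqhat
  have hphatP : ∀ i j, |phat i j| ≤ 1 := by
    intro i j; rw [hphat]; dsimp only; split_ifs <;> simp
  have hqhatP : ∀ i j, |qhat i j| ≤ 1 := by
    intro i j; rw [hqhat]; dsimp only; split_ifs <;> simp
  -- Step 4: F(Lstar) = Phi Lstar phat qhat
  have step4 : (1 / 2) * (∑ i, ∑ j, (Lstar i j - d i j) ^ 2) +
      β * ((∑ i, ∑ j, |LtP h w Lstar i j - E1 i j|) +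
        ∑ i, ∑ j, |LtQ h w Lstar i j - E2 i j|) =
      Phi h w d β E1 E2 Lstar phat qhat := by
    rw [phi_repr h w hh hw d β E1 E2 Lstar phat qhat]
    have e1 : (∑ i, ∑ j, phat i j * LtP h w Lstar i j) -
        (∑ i, ∑ j, phat i j * E1 i j) = ∑ i, ∑ j, |LtP h w Lstar i j - E1 i j| := by
      rw [merge_sub]
      refine Finset.sum_congr rfl fun i _ => Finset.sum_congr rfl fun j _ => ?_
      simpa only [hphat] using mySignMul (LtP h w Lstar i j - E1 i j)
    have e2 : (∑ i, ∑ j, qhat i j * LtQ h w Lstar i j) -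
        (∑ i, ∑ j, qhat i j * E2 i j) = ∑ i, ∑ j, |LtQ h w Lstar i j - E2 i j| := by
      rw [merge_sub]
      refine Finset.sum_congr rfl fun i _ => Finset.sum_congr rfl fun j _ => ?_
      simpa only [hqhat] using mySignMul (LtQ h w Lstar i j - E2 i j)
    rw [← e1, ← e2]; ring
  -- Step 5: Phi L ps qs ≤ F(L)
  have step5 : Phi h w d β E1 E2 L ps qs ≤
      (1 / 2) * (∑ i, ∑ j, (L i j - d i j) ^ 2) +
        β * ((∑ i, ∑ j, |LtP h w L i j - E1 i j|) +
          ∑ i, ∑ j, |LtQ h w L i j - E2 i j|) := by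
    rw [phi_repr h w hh hw d β E1 E2 L ps qs]
    have e1 : (∑ i, ∑ j, ps i j * LtP h w L i j) - (∑ i, ∑ j, ps i j * E1 i j) ≤
        ∑ i, ∑ j, |LtP h w L i j - E1 i j| := by
      rw [merge_sub]
      exact sum2_le fun i j => mul_le_abs' _ _ (hps i j)
    have e2 : (∑ i, ∑ j, qs i j * LtQ h w L i j) - (∑ i, ∑ j, qs i j * E2 i j) ≤
        ∑ i, ∑ j, |LtQ h w L i j - E2 i j| := by
      rw [merge_sub]
      exact sum2_le fun i j => mul_le_abs' _ _ (hqs i j)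
    have hsum : ((∑ i, ∑ j, ps i j * LtP h w L i j) + ∑ i, ∑ j, qs i j * LtQ h w L i j) -
        ((∑ i, ∑ j, ps i j * E1 i j) + ∑ i, ∑ j, qs i j * E2 i j) ≤
        (∑ i, ∑ j, |LtP h w L i j - E1 i j|) + ∑ i, ∑ j, |LtQ h w L i j - E2 i j| := by
      linarith
    nlinarith [mul_le_mul_of_nonneg_left hsum hβ.le]
  -- Step 3
  have s3 : Phi h w d β E1 E2 Lstar phat qhat ≤ Phi h w d β E1 E2 Lstar ps qs :=
    step3 h w hh hw d β E1 E2 H hH ps qs hps hqs hmin Lstar hLstar phat qhat hphatP hqhatP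
  -- Step 2: Phi Lstar ps qs ≤ Phi L ps qs
  have s2 : Phi h w d β E1 E2 Lstar ps qs ≤ Phi h w d β E1 E2 L ps qs := by
    have A2 : Phi h w d β E1 E2 Lstar ps qs + H ps qs = (1/2) * (∑ i, ∑ j, (d i j)^2) := by
      rw [hLstar]; exact keyA' h w d β E1 E2 H hH ps qs
    have A4 := keyA h w d β E1 E2 H hH ps qs L hL
    have hnn : 0 ≤ ∑ i, ∑ j,
        (L i j - clampC h w (fun i j => d i j - β * Lop h w ps qs i j) i j)^2 :=
      Finset.sum_nonneg fun i _ => Finset.sum_nonneg fun j _ => sq_nonneg _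
    linarith
  linarith [step4, s3, s2, step5]

end
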